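/- For 0 <= j+k <= d-1, the polynomials b_{j,k}(x,y) = x^j y^k - x^j y^k (x+y)^{d-j-k} all vanish identically on the line x + y = 1, and they are linearly independent over the reals. -/

import Mathlib

open MvPolynomial

noncomputable def bPoly (d j k : ℕ) : MvPolynomial (Fin 2) ℝ :=
  X 0 ^ j * X 1 ^ k - X 0 ^ j * X 1 ^ k * (X 0 + X 1) ^ (d - j - k)

/-!
Each `b_{j,k}` is the monomial `x^j y^k` of degree `j + k < d` minus a form of degree `d`, and the
two terms agree on `x + y = 1`. Truncating a polynomial to its homogeneous components of degree
`< d` is linear and sends `b_{j,k}` to `x^j y^k`; distinct monomials are linearly independent, so the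
`b_{j,k}` are too.
-/

theorem MvPolynomial.linearIndependent_monomial_sub_isHomogeneous {σ R ι : Type*} [CommRing R]
    {s : ι → σ →₀ ℕ} (hs : Function.Injective s) {d : ℕ} (hsd : ∀ i, (s i).degree < d)
    {q : ι → MvPolynomial σ R} (hq : ∀ i, (q i).IsHomogeneous d) :
    LinearIndependent R (fun i => monomial (s i) (1 : R) - q i) := by
  let truncation : MvPolynomial σ R →ₗ[R] MvPolynomial σ R :=
    ∑ n ∈ Finset.range d, homogeneousComponent n
  have truncation_of_isHomogeneous {p : MvPolynomial σ R} {m : ℕ} (hp : p.IsHomogeneous m) :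
      truncation p = if m < d then p else 0 := by
    simp [truncation, homogeneousComponent_of_mem hp]
  refine LinearIndependent.of_comp truncation ?_
  have truncation_comp :
      truncation ∘ (fun i => monomial (s i) (1 : R) - q i) = basisMonomials σ R ∘ s := by
    ext1 i
    simp [truncation_of_isHomogeneous (isHomogeneous_monomial (1 : R) rfl),
      truncation_of_isHomogeneous (hq i), hsd i]
  rw [truncation_comp]
  exact (basisMonomials σ R).linearIndependent.comp s hs

theorem Finsupp.single_zero_add_single_one_injective :
    Function.Injective fun jk : ℕ × ℕ => Finsupp.single (0 : Fin 2) jk.1 + Finsupp.single 1 jk.2 := by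
  intro a b h
  have h0 := DFunLike.congr_fun h 0
  have h1 := DFunLike.congr_fun h 1
  simp only [Finsupp.coe_add, Pi.add_apply, Finsupp.single_eq_same,
    Finsupp.single_eq_of_ne (by decide : (0 : Fin 2) ≠ 1),
    Finsupp.single_eq_of_ne (by decide : (1 : Fin 2) ≠ 0), add_zero, zero_add] at h0 h1
  exact Prod.ext h0 h1

theorem MvPolynomial.isHomogeneous_X_pow_mul_X_pow_mul_add_pow {R : Type*} [CommSemiring R]
    {d j k : ℕ} (h : j + k ≤ d) :
    (X 0 ^ j * X 1 ^ k * (X 0 + X 1) ^ (d - j - k) : MvPolynomial (Fin 2) R).IsHomogeneous d := by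
  have hdeg : 1 * j + 1 * k + 1 * (d - j - k) = d := by omega
  simpa only [hdeg] using (((isHomogeneous_X R 0).pow j).mul ((isHomogeneous_X R 1).pow k)).mul
    (((isHomogeneous_X R 0).add (isHomogeneous_X R 1)).pow (d - j - k))

theorem bPoly_eq_monomial_sub (d j k : ℕ) :
    bPoly d j k = monomial (Finsupp.single 0 j + Finsupp.single 1 k) 1 -
      X 0 ^ j * X 1 ^ k * (X 0 + X 1) ^ (d - j - k) := by
  rw [bPoly, X_pow_eq_monomial, X_pow_eq_monomial, monomial_mul, one_mul]

theorem stmt_15 (d : ℕ) (hd : 1 ≤ d) :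
    (∀ j k : ℕ, j + k ≤ d - 1 → ∀ x y : ℝ, x + y = 1 →
      MvPolynomial.eval ![x, y] (bPoly d j k) = 0) ∧
    LinearIndependent ℝ
      (fun jk : {jk : ℕ × ℕ // jk.1 + jk.2 ≤ d - 1} =>
        bPoly d jk.1.1 jk.1.2) := by
  refine ⟨fun j k _ x y hxy => by simp [bPoly, hxy], ?_⟩
  simp_rw [bPoly_eq_monomial_sub]
  exact linearIndependent_monomial_sub_isHomogeneous
    (Finsupp.single_zero_add_single_one_injective.comp Subtype.val_injective)
    (fun jk => by simpa using jk.2.trans_lt (Nat.sub_lt hd one_pos))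
    (fun jk => isHomogeneous_X_pow_mul_X_pow_mul_add_pow (by omega))
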